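/- (Positive spectral gap implies existence of a Green function) Assume λ₁(X) := λ₁(X, −Δ) > 0 (principal eigenvalue of the Laplacian, with potential Q = 0). Then X possesses a global Green function: there exists G : X × X → [0,∞) such that for each y ∈ X, Δ_x G(x,y) = −δ_y(x) for all x ∈ X. -/

import Mathlib

open Finset Filter

noncomputable section

variable {V : Type*}

/-- The (weighted) degree `d_x = ∑_{(x,y) ∈ E} μ_{xy}` of a vertex `x` in a locally
finite graph `G` with edge weights `μ`. -/
def deg (G : SimpleGraph V) [G.LocallyFinite] (μ : V → V → ℝ) (x : V) : ℝ :=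
  ∑ y ∈ G.neighborFinset x, μ x y

/-- The graph Laplacian `(Δu)(x) = ∑_{(x,y) ∈ E} (μ_{xy}/d_x) (u(y) - u(x))`. -/
def lap (G : SimpleGraph V) [G.LocallyFinite] (μ : V → V → ℝ) (u : V → ℝ) (x : V) : ℝ :=
  ∑ y ∈ G.neighborFinset x, μ x y / deg G μ x * (u y - u x)

/-- The squared gradient `|∇u|²(x) = ∑_{(x,y) ∈ E} (μ_{xy}/d_x) (u(y) - u(x))²`. -/
def gradSq (G : SimpleGraph V) [G.LocallyFinite] (μ : V → V → ℝ) (u : V → ℝ) (x : V) : ℝ :=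
  ∑ y ∈ G.neighborFinset x, μ x y / deg G μ x * (u y - u x) ^ 2

/-- `d̂_x = sup_{(x,y) ∈ E} d_x / μ_{xy}`. -/
def dhat (G : SimpleGraph V) [G.LocallyFinite] (μ : V → V → ℝ) (x : V) : ℝ :=
  sSup {r : ℝ | ∃ y, G.Adj x y ∧ r = deg G μ x / μ x y}

/-- The principal (Dirichlet) eigenvalue `λ₁(D, -Δ+Q)` of a finite subset `D ⊆ X`:
the infimum of the Rayleigh quotients `(∫_D (-Δu + Qu)·u) / (∫_D u²)` over test
functions `u` not identically zero on `D` and vanishing outside `D`, where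
`∫_S f = ∑_{x ∈ S} f(x) d_x`. -/
def lambda1 (G : SimpleGraph V) [G.LocallyFinite] (μ : V → V → ℝ) (Q : V → ℝ)
    (D : Finset V) : ℝ :=
  sInf {r : ℝ | ∃ u : V → ℝ, (∃ x ∈ D, u x ≠ 0) ∧ (∀ x, x ∉ D → u x = 0) ∧
    r = (∑ x ∈ D, (-lap G μ u x + Q x * u x) * u x * deg G μ x) /
        (∑ x ∈ D, (u x) ^ 2 * deg G μ x)}

/-- `λ₁(X, -Δ+Q)`: the limit of `λ₁(D_j, -Δ+Q)` along any exhaustion of `X` by finite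
subsets; by monotonicity this equals the infimum of `λ₁(D, -Δ+Q)` over all nonempty
finite subsets `D` of `X`. -/
def lambda1Top (G : SimpleGraph V) [G.LocallyFinite] (μ : V → V → ℝ) (Q : V → ℝ) : ℝ :=
  sInf {r : ℝ | ∃ D : Finset V, D.Nonempty ∧ r = lambda1 G μ Q D}

/-- `H` is the Dirichlet Green function of the ball `B(j) = {x | d(x,x₀) < j}`:
it is nonnegative, and for every `y ∈ B(j)` one has `Δ_x H(x,y) = -δ_y(x)` for
`x ∈ B(j)` and `H(x,y) = 0` for `x ∉ B(j)`. -/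
def IsDirichletGreenOnBall (G : SimpleGraph V) [G.LocallyFinite] [DecidableEq V]
    (μ : V → V → ℝ) (x₀ : V) (j : ℕ) (H : V → V → ℝ) : Prop :=
  (∀ x y, 0 ≤ H x y) ∧
  ∀ y, G.dist y x₀ < j →
    (∀ x, G.dist x x₀ < j → lap G μ (fun z => H z y) x = -(if x = y then 1 else 0)) ∧
    (∀ x, ¬ G.dist x x₀ < j → H x y = 0)

/-!
Exhaust `X` by finite sets `D`. On each `D` the Dirichlet Laplacian is injective, because a
function in its kernel would have Rayleigh quotient `0 < λ₁(X) ≤ λ₁(D)`; hence `Δu = -δ_y` has a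
solution `u_D` vanishing off `D`. By the minimum principle `u_D ≥ 0` and `u_D` increases with `D`,
and testing the Rayleigh quotient against `u_D` itself gives the uniform bound
`λ₁(X)² u_D(x)² d_x ≤ d_y`. The increasing limit is the Green function.
-/

open Topology

theorem SimpleGraph.Preconnected.forall_of_adj {G : SimpleGraph V} (hG : G.Preconnected)
    {P : V → Prop} (hP : ∀ x z, G.Adj x z → P x → P z) {x : V} (hx : P x) (z : V) : P z := by
  obtain ⟨w⟩ := hG x z
  induction w with
  | nil => exact hx
  | cons hadj _ ih => exact ih (hP _ _ hadj hx)

section Laplacian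

variable (G : SimpleGraph V) [G.LocallyFinite] (μ : V → V → ℝ)

def lapLinearMap : (V → ℝ) →ₗ[ℝ] (V → ℝ) where
  toFun := lap G μ
  map_add' u v := funext fun x => by
    simp only [lap, Pi.add_apply, ← Finset.sum_add_distrib]
    exact Finset.sum_congr rfl fun _ _ => by ring
  map_smul' a u := funext fun x => by
    simp only [lap, Pi.smul_apply, smul_eq_mul, RingHom.id_apply, Finset.mul_sum]
    exact Finset.sum_congr rfl fun _ _ => by ring

theorem lap_sub (u v : V → ℝ) : lap G μ (u - v) = lap G μ u - lap G μ v :=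
  map_sub (lapLinearMap G μ) u v

theorem lap_const (a : ℝ) (x : V) : lap G μ (fun _ => a) x = 0 := by
  simp [lap]

theorem tendsto_lap {ι : Type*} {l : Filter ι} {u : ι → V → ℝ} {v : V → ℝ}
    (h : ∀ x, Tendsto (fun i => u i x) l (𝓝 (v x))) (x : V) :
    Tendsto (fun i => lap G μ (u i) x) l (𝓝 (lap G μ v x)) :=
  tendsto_finsetSum _ fun z _ => ((h z).sub (h x)).const_mul _

variable {G μ}

theorem deg_pos_of_adj (hpos : ∀ x y, G.Adj x y → 0 < μ x y) {x z : V} (hxz : G.Adj x z) :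
    0 < deg G μ x :=
  Finset.sum_pos' (fun w hw => (hpos x w ((G.mem_neighborFinset x w).mp hw)).le)
    ⟨z, (G.mem_neighborFinset x z).mpr hxz, hpos x z hxz⟩

theorem deg_pos [Nontrivial V] (hpos : ∀ x y, G.Adj x y → 0 < μ x y) (hconn : G.Connected)
    (x : V) : 0 < deg G μ x :=
  deg_pos_of_adj hpos (hconn.preconnected.exists_adj_of_nontrivial x).choose_spec

theorem apply_eq_of_adj_of_min_of_lap_nonpos (hpos : ∀ x y, G.Adj x y → 0 < μ x y) {u : V → ℝ}
    {x z : V} (hmin : ∀ w, u x ≤ u w) (hlap : lap G μ u x ≤ 0) (hxz : G.Adj x z) :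
    u z = u x := by
  have hdeg := deg_pos_of_adj hpos hxz
  have hterm : ∀ w ∈ G.neighborFinset x, 0 ≤ μ x w / deg G μ x * (u w - u x) := fun w hw =>
    mul_nonneg (div_nonneg (hpos x w ((G.mem_neighborFinset x w).mp hw)).le hdeg.le)
      (sub_nonneg.mpr (hmin w))
  have hzero := (Finset.sum_eq_zero_iff_of_nonneg hterm).mp (le_antisymm hlap (sum_nonneg hterm))
    z ((G.mem_neighborFinset x z).mpr hxz)
  have hcoef : μ x z / deg G μ x ≠ 0 := (div_pos (hpos x z hxz) hdeg).ne'
  linarith [(mul_eq_zero.mp hzero).resolve_left hcoef]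

/-- A negative minimum over `D` would spread along edges to a vertex outside `D`. -/
theorem nonneg_of_lap_nonpos [Infinite V] (hpos : ∀ x y, G.Adj x y → 0 < μ x y)
    (hconn : G.Connected) {u : V → ℝ} {D : Finset V} (hout : ∀ x ∉ D, 0 ≤ u x)
    (hin : ∀ x ∈ D, lap G μ u x ≤ 0) (x : V) : 0 ≤ u x := by
  by_contra! hx
  have hxD : x ∈ D := by_contra fun h => (hout x h).not_gt hx
  obtain ⟨x₀, hx₀D, hx₀⟩ := D.exists_min_image u ⟨x, hxD⟩
  have hneg : u x₀ < 0 := (hx₀ x hxD).trans_lt hx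
  have hmin : ∀ w, u x₀ ≤ u w := fun w => by
    by_cases hw : w ∈ D
    · exact hx₀ w hw
    · exact hneg.le.trans (hout w hw)
  have hmem : ∀ w, u w = u x₀ → w ∈ D := fun w hw =>
    by_contra fun h => (hout w h).not_gt (hw ▸ hneg)
  have hconst : ∀ w, u w = u x₀ := hconn.preconnected.forall_of_adj
    (P := fun w => u w = u x₀) (fun w w' hww' hw => by
      rw [apply_eq_of_adj_of_min_of_lap_nonpos hpos (hw ▸ hmin) (hin w (hmem w hw)) hww', hw])
    rfl
  obtain ⟨w, hw⟩ := Infinite.exists_notMem_finset D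
  exact hw (hmem w (hconst w))

end Laplacian

section SpectralGap

variable {G : SimpleGraph V} [G.LocallyFinite] {μ : V → V → ℝ}

theorem lambda1Top_le_lambda1 (hl : 0 < lambda1Top G μ (fun _ => 0)) {D : Finset V}
    (hD : D.Nonempty) : lambda1Top G μ (fun _ => 0) ≤ lambda1 G μ (fun _ => 0) D := by
  have hbdd : BddBelow {r | ∃ D : Finset V, D.Nonempty ∧ r = lambda1 G μ (fun _ => 0) D} := by
    by_contra h
    rw [lambda1Top, Real.sInf_of_not_bddBelow h] at hl
    exact hl.false
  exact csInf_le hbdd ⟨D, hD, rfl⟩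

theorem lambda1Top_le_rayleigh (hl : 0 < lambda1Top G μ (fun _ => 0)) {D : Finset V}
    {u : V → ℝ} (hu : ∃ x ∈ D, u x ≠ 0) (hout : ∀ x ∉ D, u x = 0) :
    lambda1Top G μ (fun _ => 0) ≤
      (∑ x ∈ D, -lap G μ u x * u x * deg G μ x) / ∑ x ∈ D, u x ^ 2 * deg G μ x := by
  obtain ⟨x, hx, hux⟩ := hu
  have hlD := lambda1Top_le_lambda1 hl ⟨x, hx⟩
  by_cases hbdd : BddBelow {r : ℝ | ∃ u : V → ℝ, (∃ x ∈ D, u x ≠ 0) ∧ (∀ x, x ∉ D → u x = 0) ∧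
      r = (∑ x ∈ D, (-lap G μ u x + (fun _ => (0 : ℝ)) x * u x) * u x * deg G μ x) /
        (∑ x ∈ D, (u x) ^ 2 * deg G μ x)}
  · exact hlD.trans (csInf_le hbdd ⟨u, ⟨x, hx, hux⟩, hout, by simp⟩)
  · rw [lambda1, Real.sInf_of_not_bddBelow hbdd] at hlD
    exact absurd hl hlD.not_gt

theorem lambda1Top_mul_le_energy (hl : 0 < lambda1Top G μ (fun _ => 0))
    (hdeg : ∀ x, 0 < deg G μ x) {D : Finset V} {u : V → ℝ} (hout : ∀ x ∉ D, u x = 0) :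
    lambda1Top G μ (fun _ => 0) * ∑ x ∈ D, u x ^ 2 * deg G μ x ≤
      ∑ x ∈ D, -lap G μ u x * u x * deg G μ x := by
  by_cases hu : ∃ x ∈ D, u x ≠ 0
  · obtain ⟨x, hx, hux⟩ := hu
    have hden : 0 < ∑ x ∈ D, u x ^ 2 * deg G μ x :=
      Finset.sum_pos' (fun w _ => by have := hdeg w; positivity)
        ⟨x, hx, by have := hdeg x; positivity⟩
    exact (le_div_iff₀ hden).mp (lambda1Top_le_rayleigh hl ⟨x, hx, hux⟩ hout)
  · push Not at hu
    rw [Finset.sum_eq_zero fun x hx => by simp [hu x hx],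
      Finset.sum_eq_zero fun x hx => by simp [hu x hx], mul_zero]

theorem infinite_of_lambda1Top_pos (hl : 0 < lambda1Top G μ (fun _ => 0)) : Infinite V := by
  by_contra hfin
  have : Fintype V := @Fintype.ofFinite V (not_infinite_iff_finite.mp hfin)
  rcases isEmpty_or_nonempty V with hV | ⟨⟨x⟩⟩
  · have hD : ∀ D : Finset V, ¬D.Nonempty := fun _ ⟨x, _⟩ => hV.false x
    simp [lambda1Top, hD] at hl
  · have := lambda1Top_le_rayleigh hl (D := Finset.univ) (u := fun _ => 1)
      ⟨x, Finset.mem_univ x, one_ne_zero⟩ fun x hx => absurd (Finset.mem_univ x) hx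
    simp only [lap_const, neg_zero, zero_mul, Finset.sum_const_zero, zero_div] at this
    exact this.not_gt hl

end SpectralGap

section Dirichlet

variable (G : SimpleGraph V) [G.LocallyFinite] (μ : V → V → ℝ)

def dirichletLap (D : Finset V) : (D → ℝ) →ₗ[ℝ] (D → ℝ) :=
  LinearMap.funLeft ℝ ℝ ((↑) : D → V) ∘ₗ lapLinearMap G μ ∘ₗ
    Function.ExtendByZero.linearMap ℝ ((↑) : D → V)

variable {G μ}

theorem extend_val_apply_of_notMem {D : Finset V} (v : D → ℝ) {x : V} (hx : x ∉ D) :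
    Function.extend ((↑) : D → V) v 0 x = 0 :=
  Function.extend_apply' _ _ _ fun ⟨a, ha⟩ => hx (ha ▸ a.2)

theorem injective_dirichletLap (hl : 0 < lambda1Top G μ (fun _ => 0)) (D : Finset V) :
    Function.Injective (dirichletLap G μ D) := by
  rw [injective_iff_map_eq_zero]
  intro v hv
  by_contra hv0
  obtain ⟨x, hx⟩ := Function.ne_iff.mp hv0
  have hux : Function.extend ((↑) : D → V) v 0 x = v x := Subtype.val_injective.extend_apply v 0 x
  have hlap : ∀ z ∈ D, lap G μ (Function.extend ((↑) : D → V) v 0) z = 0 := fun z hz =>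
    congrFun hv ⟨z, hz⟩
  have := lambda1Top_le_rayleigh hl ⟨x, x.2, hux ▸ hx⟩ fun z hz => extend_val_apply_of_notMem v hz
  rw [Finset.sum_eq_zero fun z hz => by rw [hlap z hz, neg_zero, zero_mul, zero_mul],
    zero_div] at this
  exact this.not_gt hl

end Dirichlet

section Green

variable [DecidableEq V] (G : SimpleGraph V) [G.LocallyFinite] (μ : V → V → ℝ)

def IsDirichletGreen (D : Finset V) (y : V) (u : V → ℝ) : Prop :=
  (∀ x ∉ D, u x = 0) ∧ ∀ x ∈ D, lap G μ u x = -(if x = y then 1 else 0)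

variable {G μ}

theorem exists_isDirichletGreen (hl : 0 < lambda1Top G μ (fun _ => 0)) (D : Finset V) (y : V) :
    ∃ u, IsDirichletGreen G μ D y u := by
  obtain ⟨v, hv⟩ := LinearMap.injective_iff_surjective.mp (injective_dirichletLap hl D)
    fun x => -(if (x : V) = y then 1 else 0)
  exact ⟨_, fun x hx => extend_val_apply_of_notMem v hx, fun x hx => congrFun hv ⟨x, hx⟩⟩

namespace IsDirichletGreen

variable {D : Finset V} {y : V} {u : V → ℝ}

theorem nonneg [Infinite V] (hpos : ∀ x y, G.Adj x y → 0 < μ x y) (hconn : G.Connected)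
    (hu : IsDirichletGreen G μ D y u) (x : V) : 0 ≤ u x :=
  nonneg_of_lap_nonpos hpos hconn (fun x hx => (hu.1 x hx).ge)
    (fun x hx => by rw [hu.2 x hx]; split_ifs <;> norm_num) x

theorem le_of_subset [Infinite V] (hpos : ∀ x y, G.Adj x y → 0 < μ x y) (hconn : G.Connected)
    {D' : Finset V} {v : V → ℝ} (hu : IsDirichletGreen G μ D y u)
    (hv : IsDirichletGreen G μ D' y v) (hDD' : D ⊆ D') (x : V) : u x ≤ v x :=
  sub_nonneg.mp <| nonneg_of_lap_nonpos hpos hconn (u := v - u) (D := D)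
    (fun x hx => by simpa [hu.1 x hx] using hv.nonneg hpos hconn x)
    (fun x hx => by simp [lap_sub, hu.2 x hx, hv.2 x (hDD' hx)]) x

theorem sum_energy_eq (hu : IsDirichletGreen G μ D y u) (hy : y ∈ D) :
    ∑ x ∈ D, -lap G μ u x * u x * deg G μ x = u y * deg G μ y := by
  rw [Finset.sum_congr rfl fun x hx => by rw [hu.2 x hx, neg_neg, ite_mul, ite_mul, one_mul,
    zero_mul, zero_mul], Finset.sum_ite_eq' D y, if_pos hy]

/-- Testing the Rayleigh quotient against `u` gives `λ₁ u(x)² d_x ≤ u(y) d_y`, and at `x = y`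
this yields `λ₁ u(y) ≤ 1`. -/
theorem sq_mul_deg_le [Infinite V] (hpos : ∀ x y, G.Adj x y → 0 < μ x y) (hconn : G.Connected)
    (hl : 0 < lambda1Top G μ (fun _ => 0)) (hu : IsDirichletGreen G μ D y u) (hy : y ∈ D)
    (x : V) : lambda1Top G μ (fun _ => 0) ^ 2 * (u x ^ 2 * deg G μ x) ≤ deg G μ y := by
  set c := lambda1Top G μ (fun _ => 0)
  have hdeg := deg_pos hpos hconn (G := G) (μ := μ)
  have henergy : c * ∑ x ∈ D, u x ^ 2 * deg G μ x ≤ u y * deg G μ y :=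
    hu.sum_energy_eq hy ▸ lambda1Top_mul_le_energy hl hdeg hu.1
  have hterm : ∀ z ∈ D, u z ^ 2 * deg G μ z ≤ ∑ x ∈ D, u x ^ 2 * deg G μ x :=
    fun z hz => Finset.single_le_sum (f := fun x => u x ^ 2 * deg G μ x)
      (fun w _ => by have := hdeg w; positivity) hz
  have hy_le : c * (u y ^ 2 * deg G μ y) ≤ u y * deg G μ y :=
    (mul_le_mul_of_nonneg_left (hterm y hy) hl.le).trans henergy
  have hcy : c * u y ≤ 1 := by
    rcases (hu.nonneg hpos hconn y).eq_or_lt with h | h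
    · simp [← h]
    · nlinarith [mul_pos h (hdeg y)]
  by_cases hx : x ∈ D
  · have hx_le := (mul_le_mul_of_nonneg_left (hterm x hx) hl.le).trans henergy
    nlinarith [hu.nonneg hpos hconn y, hdeg y]
  · simp [hu.1 x hx, (hdeg y).le]

end IsDirichletGreen

theorem exists_green_function [Infinite V] (hpos : ∀ x y, G.Adj x y → 0 < μ x y)
    (hconn : G.Connected) (hl : 0 < lambda1Top G μ (fun _ => 0)) (y : V) :
    ∃ L : V → ℝ, (∀ x, 0 ≤ L x) ∧ ∀ x, lap G μ L x = -(if x = y then 1 else 0) := by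
  choose K hK using fun D : Finset V => exists_isDirichletGreen hl (insert y D) y
  have hmono : ∀ x, Monotone fun D => K D x := fun x _ _ hDD' =>
    (hK _).le_of_subset hpos hconn (hK _) (Finset.insert_subset_insert y hDD') x
  have hbdd : ∀ x, BddAbove (Set.range fun D => K D x) := by
    intro x
    have hdx := deg_pos hpos hconn (μ := μ) x
    refine ⟨√(deg G μ y / (lambda1Top G μ (fun _ => 0) ^ 2 * deg G μ x)),
      Set.forall_mem_range.mpr fun D => Real.le_sqrt_of_sq_le ?_⟩
    rw [le_div_iff₀ (by positivity)]
    linarith [(hK D).sq_mul_deg_le hpos hconn hl (Finset.mem_insert_self y D) x]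
  have htend : ∀ x, Tendsto (fun D => K D x) atTop (𝓝 (⨆ D, K D x)) := fun x =>
    tendsto_atTop_ciSup (hmono x) (hbdd x)
  refine ⟨fun x => ⨆ D, K D x, fun x => ((hK ∅).nonneg hpos hconn x).trans
    (le_ciSup (hbdd x) ∅), fun x => tendsto_nhds_unique (tendsto_lap G μ htend x) ?_⟩
  refine tendsto_const_nhds.congr' ((eventually_ge_atTop {x}).mono fun D hD => ?_)
  exact ((hK D).2 x (Finset.mem_insert_of_mem (Finset.singleton_subset_iff.mp hD))).symm

end Green

theorem green_exists_of_spectral_gap_general {V : Type*}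
    [DecidableEq V] (G : SimpleGraph V) [G.LocallyFinite]
    (μ : V → V → ℝ)
    (hpos : ∀ x y, G.Adj x y → 0 < μ x y) (hconn : G.Connected)
    (hl : 0 < lambda1Top G μ fun _ => 0) :
    ∃ Ggl : V → V → ℝ,
      (∀ x y, 0 ≤ Ggl x y) ∧
      (∀ y x, lap G μ (fun z => Ggl z y) x = -(if x = y then 1 else 0)) := by
  have : Infinite V := infinite_of_lambda1Top_pos hl
  choose L hL_nonneg hL_lap using exists_green_function hpos hconn hl
  exact ⟨fun x y => L y x, fun x y => hL_nonneg y x, fun y x => hL_lap y x⟩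

/-- Positive spectral gap implies existence of a Green function: if
`λ₁(X) := λ₁(X, -Δ) > 0` (potential `Q = 0`), then `X` has a global Green
function: some `G : X × X → [0,∞)` with `Δ_x G(x,y) = -δ_y(x)` for all `x, y`. -/
theorem green_exists_of_spectral_gap {V : Type*} [Countable V]
    [DecidableEq V] (G : SimpleGraph V) [G.LocallyFinite]
    (μ : V → V → ℝ) (hsymm : ∀ x y, μ x y = μ y x)
    (hpos : ∀ x y, G.Adj x y → 0 < μ x y) (hconn : G.Connected)
    (hl : 0 < lambda1Top G μ fun _ => 0) :
    ∃ Ggl : V → V → ℝ,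
      (∀ x y, 0 ≤ Ggl x y) ∧
      (∀ y x, lap G μ (fun z => Ggl z y) x = -(if x = y then 1 else 0)) :=
  green_exists_of_spectral_gap_general G μ hpos hconn hl
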